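/- arXiv:2503.11214 — 4 statements merged into one kernel-verified Lean document; each statement's English description precedes it below -/
import Mathlib

section
/- Let 0<|q|<1, λ ∈ ℂ, b₀=0, b₁,…,b_N distinct nonzero complex numbers, B₀,…,B_N m×m matrices, and let Y be a solution of (Y(qx)-Y(x))/(-x) = Σ_{i=0}^N B_i/(x-b_i) · Y(x) on the q-spiral {q^n ξ : n ∈ ℤ} ∪ {x, qx} for fixed x and ξ independent of x. Let K(x,s) satisfy q^λ K(qx,s) = K(x,s/q) = ((x-q^λ s)/(x-s)) K(x,s). For integers K ≤ L define Ỹ_i^{[K,L]}(x) = (1-q) Σ_{n=K}^L (K(x,q^nξ)/(q^nξ - b_i)) · q^nξ · Y(q^nξ). Then for each i, (Ỹ_i^{[K,L]}(qx) - Ỹ_i^{[K,L]}(x))/(-x) = ((1-q^{-λ})/(x-b_i)) Ỹ_i^{[K,L]}(x) + (1/(x-b_i)) Σ_{j=0}^N q^{-λ} B_j Ỹ_j^{[K,L]}(x) − ((1-q)q^{-λ}/(x-b_i)) · ( K(x,q^{K-1}ξ) Y(q^Kξ) − K(x,q^Lξ) Y(q^{L+1}ξ) ). -/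
private theorem tele' {M : Type*} [AddCommGroup M] (f : ℤ → M) (Kl : ℤ) :
    ∀ Ll, Kl ≤ Ll → ∑ n ∈ Finset.Icc Kl Ll, (f n - f (n+1)) = f Kl - f (Ll+1) := by
  refine Int.le_induction ?_ ?_
  · simp
  · intro L hL ih
    rw [show Finset.Icc Kl (L+1) = insert (L+1) (Finset.Icc Kl L) by ext a; simp; omega,
      Finset.sum_insert (by simp), ih]
    abel

private theorem sum_mulVec' {m' : ℕ} {J : Type*} (s : Finset J) (A : J → Matrix (Fin m') (Fin m') ℂ)
    (v : Fin m' → ℂ) : (∑ j ∈ s, A j).mulVec v = ∑ j ∈ s, (A j).mulVec v := by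
  ext k
  simp only [Matrix.mulVec, dotProduct, Finset.sum_apply, Matrix.sum_apply, Finset.sum_mul]
  rw [Finset.sum_comm]

private theorem mulVec_sum' {m' : ℕ} {J : Type*} (s : Finset J) (A : Matrix (Fin m') (Fin m') ℂ)
    (g : J → Fin m' → ℂ) : A.mulVec (∑ j ∈ s, g j) = ∑ j ∈ s, A.mulVec (g j) := by
  ext k
  simp only [Matrix.mulVec, dotProduct, Finset.sum_apply, Finset.mul_sum]
  rw [Finset.sum_comm]


private theorem scalarAux1 (x s bi u A : ℂ) (hx : x ≠ 0) (hu : u ≠ 0)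
    (h1 : s - bi ≠ 0) (h2 : x - s ≠ 0) (hxbi : x - bi ≠ 0) :
    (-x)⁻¹ * (u⁻¹ * ((x - u * s) / (x - s)) * A / (s - bi) * s - A / (s - bi) * s)
    = (1 - u⁻¹) / (x - bi) * (A / (s - bi) * s)
      + (x - bi)⁻¹ * ((1 - u⁻¹) * A * s / (x - s)) := by
  rw [inv_neg]
  field_simp
  ring

private theorem scalarAux2 (x s u A : ℂ) (hu : u ≠ 0) (h2 : x - s ≠ 0) :
    (1 - u⁻¹) * A * s / (x - s) = u⁻¹ * A - u⁻¹ * ((x - u * s) / (x - s) * A) := by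
  field_simp
  ring

/-- Proposition 2.2 of the paper: the truncated Jackson-integral
transforms Ỹ_i^{[K,L]} satisfy the q-difference system of the q-convolution up to
boundary terms. -/
theorem stmt10 (m N : ℕ) (q lam xi x : ℂ)
    (hq0 : 0 < ‖q‖) (hq1 : ‖q‖ < 1)
    (b : Fin (N + 1) → ℂ) (hb0 : b 0 = 0) (hbne : ∀ i : Fin (N + 1), i ≠ 0 → b i ≠ 0)
    (hbdist : Function.Injective b)
    (B : Fin (N + 1) → Matrix (Fin m) (Fin m) ℂ)
    (Y : ℂ → Fin m → ℂ) (K : ℂ → ℂ → ℂ)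
    (hK1 : ∀ z s : ℂ, q ^ lam * K (q * z) s = ((z - q ^ lam * s) / (z - s)) * K z s)
    (hK2 : ∀ z s : ℂ, K z (s / q) = ((z - q ^ lam * s) / (z - s)) * K z s)
    (hY : ∀ n : ℤ, (-(q ^ n * xi))⁻¹ • (Y (q * (q ^ n * xi)) - Y (q ^ n * xi)) =
        (∑ i, (q ^ n * xi - b i)⁻¹ • B i).mulVec (Y (q ^ n * xi)))
    (hx0 : x ≠ 0) (hxb : ∀ i, x ≠ b i)
    (hxib : ∀ (n : ℤ) (i : Fin (N + 1)), q ^ n * xi ≠ b i)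
    (hxix : ∀ n : ℤ, q ^ n * xi ≠ x)
    (Kl Ll : ℤ) (hKL : Kl ≤ Ll)
    (tY : Fin (N + 1) → ℂ → Fin m → ℂ)
    (htY : ∀ i z, tY i z = (1 - q) •
      ∑ n ∈ Finset.Icc Kl Ll,
        (K z (q ^ n * xi) / (q ^ n * xi - b i) * (q ^ n * xi)) • Y (q ^ n * xi))
    (i : Fin (N + 1)) :
    (-x)⁻¹ • (tY i (q * x) - tY i x) =
      ((1 - q ^ (-lam)) / (x - b i)) • tY i x +
        (x - b i)⁻¹ • ∑ j, (q ^ (-lam) • B j).mulVec (tY j x) -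
        ((1 - q) * q ^ (-lam) / (x - b i)) •
          (K x (q ^ (Kl - 1) * xi) • Y (q ^ Kl * xi) -
            K x (q ^ Ll * xi) • Y (q ^ (Ll + 1) * xi)) := by
  have hq : q ≠ 0 := fun h => by simp [h] at hq0
  have hql : q ^ lam ≠ 0 := by
    rw [Complex.cpow_def_of_ne_zero hq]; exact Complex.exp_ne_zero _
  have hc : q ^ (-lam) = (q ^ lam)⁻¹ := Complex.cpow_neg q lam
  have hsne : ∀ n : ℤ, q ^ n * xi ≠ 0 := fun n => by simpa [hb0] using hxib n 0
  have hxs : ∀ n : ℤ, x - q ^ n * xi ≠ 0 := fun n => sub_ne_zero.mpr (Ne.symm (hxix n))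
  have hsb : ∀ (n : ℤ) (j : Fin (N+1)), q ^ n * xi - b j ≠ 0 :=
    fun n j => sub_ne_zero.mpr (hxib n j)
  have hxbne : x - b i ≠ 0 := sub_ne_zero.mpr (hxb i)
  have hsucc : ∀ n : ℤ, q * (q ^ n * xi) = q ^ (n+1) * xi := fun n => by
    rw [zpow_add_one₀ hq]; ring
  have hpred : ∀ n : ℤ, (q ^ n * xi) / q = q ^ (n-1) * xi := fun n => by
    rw [zpow_sub_one₀ hq]; field_simp
  -- K(qx, s) in terms of K(x, s)
  have hKQ : ∀ n : ℤ, K (q*x) (q ^ n * xi)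
      = (q ^ lam)⁻¹ * ((x - q ^ lam * (q ^ n * xi)) / (x - q ^ n * xi)) * K x (q ^ n * xi) := by
    intro n
    have h := hK1 x (q ^ n * xi)
    have h2 : K (q*x) (q ^ n * xi) = (q ^ lam)⁻¹ * (q ^ lam * K (q*x) (q ^ n * xi)) := by
      field_simp
    rw [h2, h]; ring
  -- scalar identity 1 : partial fractions for the LHS
  have scalar1 : ∀ n : ℤ,
      (-x)⁻¹ * (K (q*x) (q ^ n * xi) / (q ^ n * xi - b i) * (q ^ n * xi)
        - K x (q ^ n * xi) / (q ^ n * xi - b i) * (q ^ n * xi))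
      = (1 - q ^ (-lam)) / (x - b i) * (K x (q ^ n * xi) / (q ^ n * xi - b i) * (q ^ n * xi))
        + (x - b i)⁻¹ * ((1 - q ^ (-lam)) * K x (q ^ n * xi) * (q ^ n * xi) / (x - q ^ n * xi)) := by
    intro n
    rw [hKQ n, hc]
    exact scalarAux1 x (q ^ n * xi) (b i) (q ^ lam) (K x (q ^ n * xi)) hx0 hql
      (hsb n i) (hxs n) hxbne
  -- scalar identity B : discrete derivative of K in s
  have scalarB : ∀ n : ℤ,
      (1 - q ^ (-lam)) * K x (q ^ n * xi) * (q ^ n * xi) / (x - q ^ n * xi)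
      = q ^ (-lam) * K x (q ^ n * xi) - q ^ (-lam) * K x (q ^ (n-1) * xi) := by
    intro n
    have h2 := hK2 x (q ^ n * xi)
    rw [hpred n] at h2
    rw [h2, hc]
    exact scalarAux2 x (q ^ n * xi) (q ^ lam) (K x (q ^ n * xi)) hql (hxs n)
  -- Step 1 : LHS as a single sum
  have e1 : (-x)⁻¹ • (tY i (q * x) - tY i x)
      = (1 - q) • ∑ n ∈ Finset.Icc Kl Ll,
          ((-x)⁻¹ * (K (q*x) (q ^ n * xi) / (q ^ n * xi - b i) * (q ^ n * xi)
            - K x (q ^ n * xi) / (q ^ n * xi - b i) * (q ^ n * xi))) • Y (q ^ n * xi) := by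
    rw [htY i (q*x), htY i x, ← smul_sub, ← Finset.sum_sub_distrib, smul_comm]
    congr 1
    rw [Finset.smul_sum]
    refine Finset.sum_congr rfl fun n _ => ?_
    rw [← sub_smul, smul_smul]
  -- split LHS into the two sums P and Q
  have hLHS : (-x)⁻¹ • (tY i (q * x) - tY i x)
      = ((1 - q) • ∑ n ∈ Finset.Icc Kl Ll,
          ((1 - q ^ (-lam)) / (x - b i)
            * (K x (q ^ n * xi) / (q ^ n * xi - b i) * (q ^ n * xi))) • Y (q ^ n * xi))
        + ((1 - q) • ∑ n ∈ Finset.Icc Kl Ll,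
          ((x - b i)⁻¹
            * ((1 - q ^ (-lam)) * K x (q ^ n * xi) * (q ^ n * xi) / (x - q ^ n * xi)))
              • Y (q ^ n * xi)) := by
    rw [e1, ← smul_add, ← Finset.sum_add_distrib]
    congr 1
    refine Finset.sum_congr rfl fun n _ => ?_
    rw [scalar1 n, add_smul]
  -- the first RHS term equals P
  have hT1 : ((1 - q ^ (-lam)) / (x - b i)) • tY i x
      = (1 - q) • ∑ n ∈ Finset.Icc Kl Ll,
          ((1 - q ^ (-lam)) / (x - b i)
            * (K x (q ^ n * xi) / (q ^ n * xi - b i) * (q ^ n * xi))) • Y (q ^ n * xi) := by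
    rw [htY i x, smul_comm]
    congr 1
    rw [Finset.smul_sum]
    exact Finset.sum_congr rfl fun n _ => smul_smul _ _ _
  -- the matrix sum term, using the q-difference system hY
  have hT2 : ∑ j, (q ^ (-lam) • B j).mulVec (tY j x)
      = (1 - q) • ∑ n ∈ Finset.Icc Kl Ll,
          (q ^ (-lam) * K x (q ^ n * xi)) • (Y (q ^ n * xi) - Y (q ^ (n+1) * xi)) := by
    have step1 : ∀ j : Fin (N+1), (q ^ (-lam) • B j).mulVec (tY j x)
        = (1 - q) • ∑ n ∈ Finset.Icc Kl Ll,
            (K x (q ^ n * xi) / (q ^ n * xi - b j) * (q ^ n * xi))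
              • (q ^ (-lam) • B j).mulVec (Y (q ^ n * xi)) := by
      intro j
      rw [htY j x, Matrix.mulVec_smul, mulVec_sum']
      congr 1
      exact Finset.sum_congr rfl fun n _ => Matrix.mulVec_smul _ _ _
    calc ∑ j, (q ^ (-lam) • B j).mulVec (tY j x)
        = ∑ j, (1 - q) • ∑ n ∈ Finset.Icc Kl Ll,
            (K x (q ^ n * xi) / (q ^ n * xi - b j) * (q ^ n * xi))
              • (q ^ (-lam) • B j).mulVec (Y (q ^ n * xi)) :=
          Finset.sum_congr rfl fun j _ => step1 j
      _ = (1 - q) • ∑ n ∈ Finset.Icc Kl Ll, ∑ j,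
            (K x (q ^ n * xi) / (q ^ n * xi - b j) * (q ^ n * xi))
              • (q ^ (-lam) • B j).mulVec (Y (q ^ n * xi)) := by
          rw [← Finset.smul_sum, Finset.sum_comm]
      _ = (1 - q) • ∑ n ∈ Finset.Icc Kl Ll,
            (q ^ (-lam) * K x (q ^ n * xi)) • (Y (q ^ n * xi) - Y (q ^ (n+1) * xi)) := by
          congr 1
          refine Finset.sum_congr rfl fun n _ => ?_
          have inner1 : ∀ j : Fin (N+1),
              (K x (q ^ n * xi) / (q ^ n * xi - b j) * (q ^ n * xi))
                • (q ^ (-lam) • B j).mulVec (Y (q ^ n * xi))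
              = (q ^ (-lam) * K x (q ^ n * xi) * (q ^ n * xi))
                  • ((q ^ n * xi - b j)⁻¹ • B j).mulVec (Y (q ^ n * xi)) := by
            intro j
            rw [Matrix.smul_mulVec, Matrix.smul_mulVec, smul_smul, smul_smul]
            congr 1
            rw [div_eq_mul_inv]
            ring
          rw [Finset.sum_congr rfl fun j _ => inner1 j, ← Finset.smul_sum, ← sum_mulVec',
            ← hY n, hsucc n, smul_smul]
          have hscal : q ^ (-lam) * K x (q ^ n * xi) * (q ^ n * xi) * (-(q ^ n * xi))⁻¹
              = -(q ^ (-lam) * K x (q ^ n * xi)) := by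
            rw [← div_eq_mul_inv, div_neg, mul_div_assoc, div_self (hsne n), mul_one]
          rw [hscal, neg_smul, ← smul_neg, neg_sub]
  -- boundary term rearrangement
  have hT3 : ((1 - q) * q ^ (-lam) / (x - b i)) •
        (K x (q ^ (Kl - 1) * xi) • Y (q ^ Kl * xi) - K x (q ^ Ll * xi) • Y (q ^ (Ll + 1) * xi))
      = (x - b i)⁻¹ • ((1 - q) • (q ^ (-lam) •
        (K x (q ^ (Kl - 1) * xi) • Y (q ^ Kl * xi)
          - K x (q ^ Ll * xi) • Y (q ^ (Ll + 1) * xi)))) := by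
    rw [smul_smul, smul_smul]
    congr 1
    ring
  -- the telescoping identity
  have hE : (∑ n ∈ Finset.Icc Kl Ll,
        (q ^ (-lam) * K x (q ^ n * xi)) • (Y (q ^ n * xi) - Y (q ^ (n+1) * xi)))
      - q ^ (-lam) • (K x (q ^ (Kl - 1) * xi) • Y (q ^ Kl * xi)
          - K x (q ^ Ll * xi) • Y (q ^ (Ll + 1) * xi))
      = ∑ n ∈ Finset.Icc Kl Ll,
          ((1 - q ^ (-lam)) * K x (q ^ n * xi) * (q ^ n * xi) / (x - q ^ n * xi))
            • Y (q ^ n * xi) := by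
    have key : ∑ n ∈ Finset.Icc Kl Ll,
        ((q ^ (-lam) * K x (q ^ n * xi)) • (Y (q ^ n * xi) - Y (q ^ (n+1) * xi))
          - ((1 - q ^ (-lam)) * K x (q ^ n * xi) * (q ^ n * xi) / (x - q ^ n * xi))
              • Y (q ^ n * xi))
        = ∑ n ∈ Finset.Icc Kl Ll,
            ((fun k : ℤ => (q ^ (-lam) * K x (q ^ (k-1) * xi)) • Y (q ^ k * xi)) n
              - (fun k : ℤ => (q ^ (-lam) * K x (q ^ (k-1) * xi)) • Y (q ^ k * xi)) (n+1)) := by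
      refine Finset.sum_congr rfl fun n _ => ?_
      simp only [add_sub_cancel_right]
      rw [scalarB n, smul_sub, sub_smul]
      abel
    rw [sub_eq_iff_eq_add, ← sub_eq_iff_eq_add']
    rw [← Finset.sum_sub_distrib, key,
      tele' (fun k : ℤ => (q ^ (-lam) * K x (q ^ (k-1) * xi)) • Y (q ^ k * xi)) Kl Ll hKL]
    simp only [add_sub_cancel_right]
    rw [smul_sub, smul_smul, smul_smul]
  -- assemble everything
  rw [hLHS, hT1, hT2, hT3, add_sub_assoc]
  congr 1
  rw [← smul_sub, ← smul_sub, hE, smul_comm]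
  congr 1
  rw [Finset.smul_sum]
  exact Finset.sum_congr rfl fun n _ => (smul_smul _ _ _).symm
end

section
/- Let B(x) be an m×m matrix-valued function on a punctured neighborhood of 0, 0<|q|<1, and suppose every eigenvalue of the limit matrix B₀∞ = lim_{x→0} B(x) has absolute value < 1. Fix ε₁ > 0 with |e| < |q|^{ε₁} for every eigenvalue e of B₀∞. Then for any solution Y of Y(qx) = B(x)Y(x) defined on a q-spiral {q^n ξ : n ∈ ℤ} and any nonzero ξ, there exist C > 0 and M ∈ ℤ such that every component of Y satisfies |[Y(q^n ξ)]_k| ≤ C |q^n ξ|^{ε₁} for all n ≥ M and all k = 1,…,m. -/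
open Filter Finset Topology
open scoped NNReal ENNReal

private lemma stmt14_toNat_tendsto : Filter.Tendsto Int.toNat Filter.atTop Filter.atTop :=
  Filter.tendsto_atTop_atTop.mpr fun b => ⟨(b : ℤ), fun a ha => by omega⟩

/-- Gelfand-type consequence: if all spectrum points have absolute value < r,
then some power has norm < r^N. -/
private lemma stmt14_exists_pow_norm_lt (m : ℕ) [Nonempty (Fin m)]
    (A : (Fin m → ℂ) →L[ℂ] (Fin m → ℂ)) (r : ℝ) (hr0 : 0 < r)
    (hlt : ∀ k ∈ spectrum ℂ A, ‖k‖ < r) :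
    ∃ N : ℕ, 1 ≤ N ∧ ‖A ^ N‖ < r ^ N := by
  set rr : ℝ≥0 := ⟨r, hr0.le⟩ with hrr
  have hlt' : ∀ k ∈ spectrum ℂ A, ‖k‖₊ < rr := by
    intro k hk
    have h := hlt k hk
    rw [← NNReal.coe_lt_coe]
    exact h
  have hsr : spectralRadius ℂ A < (rr : ℝ≥0∞) :=
    spectrum.spectralRadius_lt_of_forall_lt_of_nonempty (spectrum.nonempty A) hlt'
  have hg := spectrum.pow_nnnorm_pow_one_div_tendsto_nhds_spectralRadius A
  obtain ⟨N, hNlt, hN1⟩ := ((hg.eventually_lt_const hsr).and (eventually_ge_atTop 1)).exists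
  refine ⟨N, hN1, ?_⟩
  have hN0 : (0:ℝ) < N := by exact_mod_cast hN1
  have h1 := ENNReal.rpow_lt_rpow hNlt hN0
  rw [← ENNReal.rpow_mul, one_div, inv_mul_cancel₀ (ne_of_gt hN0), ENNReal.rpow_one,
    ENNReal.rpow_natCast, ← ENNReal.coe_pow, ENNReal.coe_lt_coe] at h1
  have h2 := NNReal.coe_lt_coe.mpr h1
  rw [NNReal.coe_pow] at h2
  exact h2

set_option maxHeartbeats 1000000 in
/-- Proposition 2.6 (i) of the paper: if all eigenvalues of
B₀∞ = lim_{x→0} B(x) have absolute value < 1, and ε₁ > 0 satisfies |e| < |q|^{ε₁} for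
every eigenvalue e, then any solution Y of Y(qx) = B(x)Y(x) on a q-spiral satisfies
|[Y(qⁿξ)]_k| ≤ C |qⁿξ|^{ε₁} for all large n. -/
theorem stmt14 (m : ℕ) (q xi : ℂ) (hq0 : 0 < ‖q‖) (hq1 : ‖q‖ < 1)
    (hxi : xi ≠ 0)
    (B : ℂ → Matrix (Fin m) (Fin m) ℂ) (B0inf : Matrix (Fin m) (Fin m) ℂ)
    (hlim : Filter.Tendsto B (nhdsWithin 0 {(0 : ℂ)}ᶜ) (nhds B0inf))
    (heig1 : ∀ e ∈ spectrum ℂ B0inf, ‖e‖ < 1)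
    (eps1 : ℝ) (heps1 : 0 < eps1)
    (heig : ∀ e ∈ spectrum ℂ B0inf, ‖e‖ < ‖q‖ ^ eps1)
    (Y : ℂ → Fin m → ℂ)
    (hY : ∀ n : ℤ, Y (q * (q ^ n * xi)) = (B (q ^ n * xi)).mulVec (Y (q ^ n * xi))) :
    ∃ C : ℝ, 0 < C ∧ ∃ M : ℤ, ∀ n : ℤ, M ≤ n → ∀ k : Fin m,
      ‖Y (q ^ n * xi) k‖ ≤ C * ‖q ^ n * xi‖ ^ eps1 := by
  classical
  have hqne : q ≠ 0 := fun h => by simp [h] at hq0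
  set r : ℝ := ‖q‖ ^ eps1 with hrdef
  have hr0 : 0 < r := Real.rpow_pos_of_pos hq0 _
  rcases Nat.eq_zero_or_pos m with hm | hm
  · subst hm
    exact ⟨1, one_pos, 0, fun n _ k => k.elim0⟩
  haveI : Nonempty (Fin m) := ⟨⟨0, hm⟩⟩
  -- move to continuous linear maps
  set φ : Matrix (Fin m) (Fin m) ℂ ≃ₐ[ℂ] ((Fin m → ℂ) →L[ℂ] (Fin m → ℂ)) :=
    Matrix.toLinAlgEquiv'.trans (Module.End.toContinuousLinearMap (Fin m → ℂ)) with hφdef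
  set A : (Fin m → ℂ) →L[ℂ] (Fin m → ℂ) := φ B0inf with hA
  have hspec : spectrum ℂ A = spectrum ℂ B0inf := AlgEquiv.spectrum_eq φ B0inf
  have hltA : ∀ k ∈ spectrum ℂ A, ‖k‖ < r := by
    intro k hk
    exact heig k (hspec ▸ hk)
  obtain ⟨N, hN1, hN⟩ := stmt14_exists_pow_norm_lt m A r hr0 hltA
  -- the auxiliary "adapted norm" g
  set c2 : ℝ := (∑ i ∈ Finset.range N, r ^ (N - 1 - i) * ‖A ^ i‖) + 1 with hc2
  have hc2pos : 0 < c2 := by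
    have : 0 ≤ ∑ i ∈ Finset.range N, r ^ (N - 1 - i) * ‖A ^ i‖ :=
      Finset.sum_nonneg fun i _ => by positivity
    linarith
  set δ : ℝ := r ^ N - ‖A ^ N‖ with hδ
  have hδpos : 0 < δ := sub_pos.mpr hN
  set g : (Fin m → ℂ) → ℝ := fun v => ∑ i ∈ Finset.range N, r ^ (N - 1 - i) * ‖(A ^ i) v‖
    with hgdef
  have hg_nonneg : ∀ v, 0 ≤ g v := fun v => Finset.sum_nonneg fun i _ => by positivity
  have hg_lower : ∀ v, r ^ (N - 1) * ‖v‖ ≤ g v := by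
    intro v
    have h0 : (0:ℕ) ∈ Finset.range N := Finset.mem_range.mpr hN1
    have := Finset.single_le_sum (f := fun i => r ^ (N - 1 - i) * ‖(A ^ i) v‖)
      (fun i _ => by positivity) h0
    simpa [hgdef] using this
  have hg_upper : ∀ v, g v ≤ c2 * ‖v‖ := by
    intro v
    have h1 : g v ≤ ∑ i ∈ Finset.range N, r ^ (N - 1 - i) * ‖A ^ i‖ * ‖v‖ := by
      refine Finset.sum_le_sum fun i _ => ?_
      rw [mul_assoc]
      exact mul_le_mul_of_nonneg_left ((A ^ i).le_opNorm v) (by positivity)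
    rw [← Finset.sum_mul] at h1
    have h2 : (∑ i ∈ Finset.range N, r ^ (N - 1 - i) * ‖A ^ i‖) * ‖v‖ ≤ c2 * ‖v‖ := by
      apply mul_le_mul_of_nonneg_right _ (norm_nonneg v)
      rw [hc2]; linarith
    linarith
  have hg_add : ∀ u w, g (u + w) ≤ g u + g w := by
    intro u w
    rw [hgdef]
    simp only
    rw [← Finset.sum_add_distrib]
    refine Finset.sum_le_sum fun i _ => ?_
    rw [← mul_add]
    refine mul_le_mul_of_nonneg_left ?_ (by positivity)
    rw [map_add]
    exact norm_add_le _ _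
  have hgA : ∀ v, g (A v) ≤ r * g v - δ * ‖v‖ := by
    intro v
    have key : g (A v) + r ^ N * ‖v‖ = r * g v + ‖(A ^ N) v‖ := by
      have e1 : ∑ j ∈ Finset.range (N + 1), r ^ (N - j) * ‖(A ^ j) v‖
          = g (A v) + r ^ N * ‖v‖ := by
        rw [Finset.sum_range_succ']
        have e0 : r ^ (N - 0) * ‖(A ^ 0) v‖ = r ^ N * ‖v‖ := by simp
        rw [e0]
        congr 1
        refine Finset.sum_congr rfl fun i _ => ?_
        have he : N - (i + 1) = N - 1 - i := by omega
        rw [he, pow_succ, ContinuousLinearMap.mul_apply]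
      have e2 : ∑ j ∈ Finset.range (N + 1), r ^ (N - j) * ‖(A ^ j) v‖
          = r * g v + ‖(A ^ N) v‖ := by
        rw [Finset.sum_range_succ]
        congr 1
        · rw [hgdef]
          simp only
          rw [Finset.mul_sum]
          refine Finset.sum_congr rfl fun i hi => ?_
          rw [← mul_assoc]
          congr 1
          rw [← pow_succ']
          congr 1
          have := Finset.mem_range.mp hi
          omega
        · simp
      rw [← e1, e2]
    have hAN : ‖(A ^ N) v‖ ≤ ‖A ^ N‖ * ‖v‖ := (A ^ N).le_opNorm v
    have : δ * ‖v‖ = r ^ N * ‖v‖ - ‖A ^ N‖ * ‖v‖ := by rw [hδ]; ring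
    linarith
  have hstep : ∀ (A' : (Fin m → ℂ) →L[ℂ] (Fin m → ℂ)) v, ‖A' - A‖ ≤ δ / c2 →
      g (A' v) ≤ r * g v := by
    intro A' v hA'
    have hsplit : A' v = A v + (A' - A) v := by simp
    rw [hsplit]
    have h1 := hg_add (A v) ((A' - A) v)
    have h2 := hgA v
    have h3 : g ((A' - A) v) ≤ c2 * ‖(A' - A) v‖ := hg_upper _
    have h4 : ‖(A' - A) v‖ ≤ δ / c2 * ‖v‖ :=
      le_trans ((A' - A).le_opNorm v) (mul_le_mul_of_nonneg_right hA' (norm_nonneg v))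
    have h5 : c2 * (δ / c2 * ‖v‖) = δ * ‖v‖ := by field_simp
    have h6 : c2 * ‖(A' - A) v‖ ≤ c2 * (δ / c2 * ‖v‖) :=
      mul_le_mul_of_nonneg_left h4 hc2pos.le
    calc g (A v + (A' - A) v) ≤ g (A v) + g ((A' - A) v) := h1
      _ ≤ (r * g v - δ * ‖v‖) + c2 * ‖(A' - A) v‖ := by linarith
      _ ≤ (r * g v - δ * ‖v‖) + c2 * (δ / c2 * ‖v‖) := by linarith
      _ = r * g v := by rw [h5]; ring
  -- the q-spiral tends to 0
  have hxne : ∀ n : ℤ, q ^ n * xi ≠ 0 := fun n => mul_ne_zero (zpow_ne_zero _ hqne) hxi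
  have hxtend : Tendsto (fun n : ℤ => q ^ n * xi) atTop (nhdsWithin 0 {(0:ℂ)}ᶜ) := by
    rw [tendsto_nhdsWithin_iff]
    constructor
    · have hq1' : ‖q‖ < 1 := by simpa using hq1
      have hnat : Tendsto (fun k : ℕ => q ^ (k:ℤ) * xi) atTop (𝓝 0) := by
        have h := (tendsto_pow_atTop_nhds_zero_of_norm_lt_one hq1').mul_const xi
        rw [zero_mul] at h
        simpa [zpow_natCast] using h
      have hcomp := hnat.comp stmt14_toNat_tendsto
      refine hcomp.congr' ?_
      filter_upwards [eventually_ge_atTop (0:ℤ)] with n hn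
      simp only [Function.comp_apply]
      rw [Int.toNat_of_nonneg hn]
    · exact Eventually.of_forall fun n => hxne n
  -- the matrices along the spiral converge to A
  have hφcont : Continuous φ := φ.toLinearMap.continuous_of_finiteDimensional
  have hAseq : Tendsto (fun n : ℤ => φ (B (q ^ n * xi))) atTop (𝓝 A) :=
    (hφcont.tendsto B0inf).comp (hlim.comp hxtend)
  obtain ⟨M, hM⟩ : ∃ M : ℤ, ∀ n : ℤ, M ≤ n → ‖φ (B (q ^ n * xi)) - A‖ ≤ δ / c2 := by
    obtain ⟨M, hM⟩ := (Metric.tendsto_atTop.mp hAseq) (δ / c2) (by positivity)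
    exact ⟨M, fun n hn => by
      have := hM n hn
      rw [dist_eq_norm] at this
      exact this.le⟩
  -- the recurrence
  set v : ℤ → (Fin m → ℂ) := fun n => Y (q ^ n * xi) with hv
  have hφapp : ∀ (Mx : Matrix (Fin m) (Fin m) ℂ) (w : Fin m → ℂ),
      (φ Mx) w = Mx.mulVec w := fun Mx w => rfl
  have hrec : ∀ n : ℤ, v (n + 1) = (φ (B (q ^ n * xi))) (v n) := by
    intro n
    have h2 : q ^ (n + 1) * xi = q * (q ^ n * xi) := by
      rw [zpow_add_one₀ hqne]; ring
    rw [hv]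
    simp only
    rw [h2, hY n, hφapp]
  -- iterate the contraction
  have hiter : ∀ j : ℕ, g (v (M + j)) ≤ g (v M) * r ^ j := by
    intro j
    induction j with
    | zero => simp
    | succ j ih =>
      have h1 : (M + ((j:ℕ)+1 : ℕ) : ℤ) = (M + j) + 1 := by push_cast; ring
      rw [h1, hrec (M + j)]
      have h2 := hstep (φ (B (q ^ (M + (j:ℤ)) * xi))) (v (M + j))
        (hM _ (le_add_of_nonneg_right (Int.natCast_nonneg j)))
      calc g _ ≤ r * g (v (M + j)) := h2
        _ ≤ r * (g (v M) * r ^ j) := mul_le_mul_of_nonneg_left ih hr0.le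
        _ = g (v M) * r ^ (j + 1) := by ring
  -- assemble the constant
  set D : ℝ := ‖xi‖ ^ eps1 with hD
  have hDpos : 0 < D := Real.rpow_pos_of_pos (norm_pos_iff.mpr hxi) eps1
  have hrM : (0:ℝ) < r ^ M := zpow_pos hr0 M
  have hrN1 : (0:ℝ) < r ^ (N - 1) := pow_pos hr0 _
  refine ⟨(g (v M) + 1) / (r ^ (N - 1) * r ^ M * D), by positivity, M, ?_⟩
  intro n hn k
  -- rewrite the right-hand side
  have habs : ‖q ^ n * xi‖ ^ eps1 = r ^ n * D := by
    rw [norm_mul, norm_zpow, Real.mul_rpow (zpow_nonneg hq0.le n) (norm_nonneg xi)]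
    · congr 1
      rw [← Real.rpow_intCast_mul hq0.le n eps1, mul_comm ((n:ℤ):ℝ) eps1,
        Real.rpow_mul_intCast hq0.le eps1 n]
  -- chain of inequalities
  have hj : (M + ((n - M).toNat : ℤ) : ℤ) = n := by omega
  have h1 : g (v n) ≤ g (v M) * r ^ ((n - M).toNat) := by
    have := hiter (n - M).toNat
    rwa [hj] at this
  have hzp : r ^ ((n - M).toNat) = r ^ n / r ^ M := by
    rw [← zpow_natCast r ((n - M).toNat), Int.toNat_of_nonneg (by omega : (0:ℤ) ≤ n - M),
      zpow_sub₀ (ne_of_gt hr0)]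
  have h2 : ‖v n‖ ≤ g (v n) / r ^ (N - 1) :=
    (le_div_iff₀ hrN1).mpr (by rw [mul_comm]; exact hg_lower (v n))
  have hk : ‖Y (q ^ n * xi) k‖ ≤ ‖v n‖ := by
    have := norm_le_pi_norm (v n) k
    simpa [hv] using this
  have hrn : (0:ℝ) < r ^ n := zpow_pos hr0 n
  have hfinal : g (v M) * r ^ ((n - M).toNat) / r ^ (N - 1)
      ≤ (g (v M) + 1) / (r ^ (N - 1) * r ^ M * D) * (r ^ n * D) := by
    have hR : (g (v M) + 1) / (r ^ (N - 1) * r ^ M * D) * (r ^ n * D)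
        = (g (v M) + 1) * r ^ n / (r ^ M * r ^ (N - 1)) := by
      field_simp
    have hL : g (v M) * (r ^ n / r ^ M) / r ^ (N - 1)
        = g (v M) * r ^ n / (r ^ M * r ^ (N - 1)) := by
      field_simp
    rw [hzp, hL, hR]
    have hmul : g (v M) * r ^ n ≤ (g (v M) + 1) * r ^ n :=
      mul_le_mul_of_nonneg_right (by linarith) hrn.le
    exact (div_le_div_iff_of_pos_right (by positivity)).mpr hmul
  calc ‖Y (q ^ n * xi) k‖ ≤ ‖v n‖ := hk
    _ ≤ g (v n) / r ^ (N - 1) := h2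
    _ ≤ g (v M) * r ^ ((n - M).toNat) / r ^ (N - 1) := by
        exact (div_le_div_iff_of_pos_right hrN1).mpr h1
    _ ≤ (g (v M) + 1) / (r ^ (N - 1) * r ^ M * D) * (r ^ n * D) := hfinal
    _ = (g (v M) + 1) / (r ^ (N - 1) * r ^ M * D) * ‖q ^ n * xi‖ ^ eps1 := by
        rw [habs]
end

section
/- Let 0<|q|<1 and let a vector function Ỹ(x) = (ỹ₀(x), ỹ₁(x))ᵀ satisfy (Ỹ(qx)-Ỹ(x))/(-x) = [G₀/x + G₁/(x - 1/α)] Ỹ(x) with G₀ = [[1 - q^{μ-λ}, q^{μ-λ}(1-β/α)],[0,0]] and G₁ = [[0,0],[q^{-λ} - q^{μ-λ}, q^{μ-λ}(1-β/α) + 1 - q^{-λ}]], for all x in a q-invariant domain avoiding 0 and the poles. Then ỹ₀ satisfies the single second-order q-difference equation (q^{-λ}βx - q) ỹ₀(x/q) + q^{λ-μ}(αx - q) ỹ₀(qx) − {(q^{-μ}α + β)x − q − q^{λ-μ+1}} ỹ₀(x) = 0. -/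
set_option maxHeartbeats 2000000 in
/-- the first component ỹ₀ of a solution of the 2×2 system attached to
(G₀, G₁) satisfies the single second-order q-hypergeometric equation
(q^{-λ}βx - q) ỹ₀(x/q) + q^{λ-μ}(αx - q) ỹ₀(qx) - ((q^{-μ}α + β)x - q - q^{λ-μ+1}) ỹ₀(x) = 0. -/
theorem stmt16 (q lam mu alpha beta : ℂ) (hq0 : 0 < ‖q‖)
    (hq1 : ‖q‖ < 1) (ha : alpha ≠ 0) (hb : beta ≠ 0) (hab : alpha ≠ beta)
    (hql : q ^ lam ≠ 0) (hqm : q ^ mu ≠ 0)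
    (D : Set ℂ) (hDq : ∀ x ∈ D, q * x ∈ D) (hDq' : ∀ x ∈ D, x / q ∈ D)
    (hD0 : ∀ x ∈ D, x ≠ 0) (hDa : ∀ x ∈ D, x ≠ 1 / alpha)
    (y0 y1 : ℂ → ℂ)
    (heq0 : ∀ x ∈ D, (y0 (q * x) - y0 x) / (-x) =
        ((1 - q ^ (mu - lam)) / x) * y0 x + (q ^ (mu - lam) * (1 - beta / alpha) / x) * y1 x)
    (heq1 : ∀ x ∈ D, (y1 (q * x) - y1 x) / (-x) =
        ((q ^ (-lam) - q ^ (mu - lam)) / (x - 1 / alpha)) * y0 x +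
          ((q ^ (mu - lam) * (1 - beta / alpha) + 1 - q ^ (-lam)) / (x - 1 / alpha)) * y1 x) :
    ∀ x ∈ D,
      (q ^ (-lam) * beta * x - q) * y0 (x / q) +
        q ^ (lam - mu) * (alpha * x - q) * y0 (q * x) -
        ((q ^ (-mu) * alpha + beta) * x - q - q ^ (lam - mu + 1)) * y0 x = 0 := by
  intro x hx
  have hq : q ≠ 0 := by
    intro h; rw [h] at hq0; simp at hq0
  have hx0 : x ≠ 0 := hD0 x hx
  have hu : x / q ∈ D := hDq' x hx
  have hu0 : x / q ≠ 0 := hD0 _ hu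
  have hw : x / q - 1 / alpha ≠ 0 := sub_ne_zero.mpr (hDa _ hu)
  have hqux : q * (x / q) = x := by field_simp
  have h0x := heq0 x hx
  have h0u := heq0 (x / q) hu
  have h1u := heq1 (x / q) hu
  rw [hqux] at h0u h1u
  have ec : q ^ (mu - lam) = q ^ mu / q ^ lam := Complex.cpow_sub mu lam hq
  have ed : q ^ (-lam) = (q ^ lam)⁻¹ := Complex.cpow_neg q lam
  have em : q ^ (-mu) = (q ^ mu)⁻¹ := Complex.cpow_neg q mu
  have elm : q ^ (lam - mu) = q ^ lam / q ^ mu := Complex.cpow_sub lam mu hq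
  have elm1 : q ^ (lam - mu + 1) = (q ^ lam / q ^ mu) * q := by
    rw [Complex.cpow_add _ _ hq, elm, Complex.cpow_one]
  rw [ec] at h0x h0u
  rw [ec, ed] at h1u
  rw [ed, elm, em, elm1]
  have hnx : -x ≠ 0 := neg_ne_zero.mpr hx0
  have hba : alpha - beta ≠ 0 := sub_ne_zero.mpr hab
  have hxa : x * alpha - q ≠ 0 := by
    intro h
    apply hw
    field_simp
    linear_combination h
  field_simp at h0x h0u h1u ⊢
  refine mul_left_cancel₀ (a := alpha) ha ?_
  linear_combination
    (q ^ mu * (alpha - beta)) * h1u - (q ^ lam * (x * alpha - q)) * h0x +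
    (q ^ lam * (x * alpha - q) -
        x * (q ^ mu * (alpha - beta) + q ^ lam * alpha - alpha)) * h0u
end

section
/- Let V be a finite-dimensional complex vector space, B₀,…,B_N endomorphisms of V, and λ₁, λ₂ ∈ ℂ with q^{λ₁}, q^{λ₂} nonzero (0<|q|<1). Let G_j^q(λ₁,λ₂) denote the composition of two q-convolutions: the endomorphism of (V^{⊕(N+1)})^{⊕(N+1)} obtained by applying c^q_{λ₂} to (G₀^q(λ₁),…,G_N^q(λ₁)). Explicitly, for u = (u_{j,k})_{0≤j,k≤N}, the (j,k)-component of G_j^q(λ₁,λ₂)u equals (1−q^{-λ₂}) u_{j,k} + q^{-λ₂}(1−q^{-λ₁}) u_{k,k} + q^{-λ₁-λ₂} Σ_{l=0}^N B_l u_{k,l}, and all components with first index ≠ j vanish. Then G_j^q(λ₁, λ₂) = q^{-λ₁-λ₂} G_j(q^{λ₁} − 1, q^{λ₁+λ₂} − q^{λ₁}), where G_j(μ₁,μ₂) is the composed Dettweiler–Reiter convolution whose (j,k)-component is μ₂ u_{j,k} + μ₁ u_{k,k} + Σ_l B_l u_{k,l} (other components zero). -/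
/-- the composition of two reformulated q-convolutions satisfies
G_j^q(λ₁, λ₂) = q^{-λ₁-λ₂} G_j(q^{λ₁} - 1, q^{λ₁+λ₂} - q^{λ₁}), where G_j(μ₁,μ₂) is the
composed Dettweiler–Reiter convolution. -/
theorem stmt19 (V : Type*) [AddCommGroup V] [Module ℂ V] [FiniteDimensional ℂ V]
    (N : ℕ) (B : Fin (N + 1) → V →ₗ[ℂ] V) (q lam1 lam2 : ℂ)
    (hq0 : 0 < ‖q‖) (hq1 : ‖q‖ < 1)
    (h1 : q ^ lam1 ≠ 0) (h2 : q ^ lam2 ≠ 0)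
    (j : Fin (N + 1)) (u : Fin (N + 1) → Fin (N + 1) → V) :
    (fun (j' k : Fin (N + 1)) => if j' = j then
        (1 - q ^ (-lam2)) • u j' k + (q ^ (-lam2) * (1 - q ^ (-lam1))) • u k k +
          q ^ (-lam1 - lam2) • ∑ l, B l (u k l)
      else 0) =
      fun (j' k : Fin (N + 1)) => q ^ (-lam1 - lam2) •
        (if j' = j then
          (q ^ (lam1 + lam2) - q ^ lam1) • u j' k + (q ^ lam1 - 1) • u k k +
            ∑ l, B l (u k l)
        else (0 : V)) := by
  have hq : q ≠ 0 := by
    intro h; rw [h] at hq0; simp at hq0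
  funext j' k
  by_cases hj : j' = j
  · simp only [hj, if_true, smul_add, smul_smul]
    have e1 : q ^ (-lam1 - lam2) * (q ^ (lam1 + lam2) - q ^ lam1) = 1 - q ^ (-lam2) := by
      rw [mul_sub, ← Complex.cpow_add _ _ hq, ← Complex.cpow_add _ _ hq]
      ring_nf
      rw [Complex.cpow_neg]
      field_simp
      rw [Complex.cpow_zero, one_mul]
    have e2 : q ^ (-lam1 - lam2) * (q ^ lam1 - 1) = q ^ (-lam2) * (1 - q ^ (-lam1)) := by
      rw [mul_sub, mul_sub, ← Complex.cpow_add _ _ hq]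
      ring_nf
      congr 1
      rw [show -lam1 - lam2 = -lam2 + -lam1 by ring, Complex.cpow_add _ _ hq]
    rw [e1, e2]
  · simp [hj]
end
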